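/- Let a : ℕ → ℂ with Σₙ |aₙ|² = 1 and Σₙ n·|aₙ|² ≤ E, and let N ≥ 1 with E/N < 1. Define the truncated normalized vector b by bₙ = aₙ/√(Σ_{k ≤ N}|a_k|²) for n ≤ N and bₙ = 0 otherwise. Then |⟨a, b⟩|² ≥ 1 − E/N, i.e., the trace distance between the pure states a and b is at most √(E/N). -/

import Mathlib

set_option maxHeartbeats 1000000

open Finset in
theorem gentle_measurement_truncation (a : ℕ → ℂ) (E : ℝ)
    (hs2 : Summable fun n : ℕ => ‖a n‖ ^ 2)
    (hnorm : ∑' n : ℕ, ‖a n‖ ^ 2 = 1)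
    (hsE : Summable fun n : ℕ => (n : ℝ) * ‖a n‖ ^ 2)
    (henergy : ∑' n : ℕ, (n : ℝ) * ‖a n‖ ^ 2 ≤ E)
    (N : ℕ) (hN : 1 ≤ N) (hEN : E / N < 1)
    (b : ℕ → ℂ)
    (hb : ∀ n, b n = if n ≤ N then
      a n / (Real.sqrt (∑ k ∈ Finset.range (N + 1), ‖a k‖ ^ 2) : ℂ) else 0) :
    1 - E / N ≤ ‖∑' n : ℕ, (starRingEnd ℂ) (a n) * b n‖ ^ 2 := by
  set S := ∑ k ∈ Finset.range (N + 1), ‖a k‖ ^ 2 with hSdef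
  have hSnn : 0 ≤ S := Finset.sum_nonneg fun k _ => sq_nonneg _
  have hNpos : (0:ℝ) < N := by exact_mod_cast hN
  set T := ∑' i : ℕ, ‖a (i + (N+1))‖ ^ 2 with hTdef
  have hST : S + T = 1 := by
    rw [← hnorm]
    exact Summable.sum_add_tsum_nat_add (N+1) hs2
  have hTsum : Summable fun i => ‖a (i+(N+1))‖^2 := (summable_nat_add_iff (N+1)).2 hs2
  have hEsum : Summable fun i => ((i+(N+1) : ℕ):ℝ) * ‖a (i+(N+1))‖^2 :=
    (summable_nat_add_iff (N+1)).2 hsE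
  have h1 : (N:ℝ) * T ≤ E := by
    rw [hTdef, ← tsum_mul_left]
    calc ∑' i : ℕ, (N:ℝ) * ‖a (i+(N+1))‖^2
        ≤ ∑' i : ℕ, ((i+(N+1) : ℕ):ℝ) * ‖a (i+(N+1))‖^2 := by
          refine Summable.tsum_le_tsum (fun i => ?_) (hTsum.mul_left _) hEsum
          refine mul_le_mul_of_nonneg_right ?_ (sq_nonneg _)
          push_cast; linarith
      _ ≤ ∑' n : ℕ, (n:ℝ) * ‖a n‖^2 := by
          rw [← Summable.sum_add_tsum_nat_add (N+1) hsE]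
          have : 0 ≤ ∑ i ∈ Finset.range (N+1), (i:ℝ) * ‖a i‖^2 :=
            Finset.sum_nonneg fun i _ => mul_nonneg (Nat.cast_nonneg _) (sq_nonneg _)
          linarith
      _ ≤ E := henergy
  have hTle : T ≤ E / N := (le_div_iff₀ hNpos).2 (by linarith [h1])
  have hSpos : 0 < S := by linarith
  have hsq : 0 < Real.sqrt S := Real.sqrt_pos.2 hSpos
  have hval : ∑' n : ℕ, (starRingEnd ℂ) (a n) * b n = ((S / Real.sqrt S : ℝ) : ℂ) := by
    rw [tsum_eq_sum (s := Finset.range (N+1)) (f := fun n => (starRingEnd ℂ) (a n) * b n)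
      (fun n hn => by
        show (starRingEnd ℂ) (a n) * b n = 0
        rw [hb n, if_neg (fun h => hn (Finset.mem_range.2 (Nat.lt_succ_of_le h))), mul_zero])]
    have key : ∀ n ∈ Finset.range (N+1),
        (starRingEnd ℂ) (a n) * b n = ((‖a n‖^2 : ℝ) : ℂ) / ((Real.sqrt S : ℝ) : ℂ) := by
      intro n hn
      rw [hb n, if_pos (Nat.lt_succ_iff.1 (Finset.mem_range.1 hn)), ← mul_div_assoc]
      congr 1
      rw [Complex.conj_mul']
      push_cast
      ring
    rw [Finset.sum_congr rfl key, ← Finset.sum_div]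
    rw [hSdef]
    push_cast
    ring
  rw [hval]
  have hnorm' : ‖((S / Real.sqrt S : ℝ) : ℂ)‖ = S / Real.sqrt S := by
    rw [Complex.norm_real, Real.norm_eq_abs, abs_of_nonneg (div_nonneg hSnn hsq.le)]
  rw [hnorm', div_pow, Real.sq_sqrt hSnn, sq, mul_div_assoc, div_self hSpos.ne', mul_one]
  linarith
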